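/- Let A, B, B₀ > 0 and α > β > 1. For each integer N ≥ 2 define Ã_N = (αA/2^{α+1}) Σ_{j=1}^{N−1} |sin(jπ/N)|^{−α} and B̃_N = (β/2^{β+1}) Σ_{j=1}^{N−1} |sin(jπ/N)|^{−β} [(B−B₀) cos²(jπ/N) + B₀]. Then B̃_N > 0 for every N ≥ 2, and if moreover α > 3, as N → ∞ one has Ã_N (2π)^α / N^α → αA ζ(α) and B̃_N (2π)^β / N^β → βB ζ(β). -/

import Mathlib

/-- The Riemann zeta function for real `x > 1`, `ζ(x) = Σ_{n ≥ 1} n^{−x}`. -/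
noncomputable def zetaR (x : ℝ) : ℝ := ∑' n : ℕ, (1 : ℝ) / ((n : ℝ) + 1) ^ x

/-- `Ã_N = (αA/2^{α+1}) Σ_{j=1}^{N−1} |sin(jπ/N)|^{−α}`. -/
noncomputable def ringA (A α : ℝ) (N : ℕ) : ℝ :=
  (α * A / 2 ^ (α + 1)) *
    ∑ j ∈ Finset.Icc 1 (N - 1), 1 / |Real.sin (j * Real.pi / N)| ^ α

/-- `B̃_N = (β/2^{β+1}) Σ_{j=1}^{N−1} |sin(jπ/N)|^{−β} [(B−B₀)cos²(jπ/N) + B₀]`. -/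
noncomputable def ringB (B B₀ β : ℝ) (N : ℕ) : ℝ :=
  (β / 2 ^ (β + 1)) *
    ∑ j ∈ Finset.Icc 1 (N - 1),
      (1 / |Real.sin (j * Real.pi / N)| ^ β) *
        ((B - B₀) * Real.cos (j * Real.pi / N) ^ 2 + B₀)

/-!
Since `(2π/N)^γ / (2 |sin(jπ/N)|)^γ = (π / (N |sin(jπ/N)|))^γ = (j |sinc(jπ/N)|)^{-γ}`, the `j`-th
term of `B̃_N (2π)^γ / N^γ`, counted from either end of the ring, tends to `(γ/2) B j^{-γ}`; the
weight `(B - B₀) cos² x + B₀` is symmetric under `x ↦ π - x` and equals `B` at `0`. Folding the sum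
at `j = N/2`, Jordan's inequality `sinc x ≥ 2/π` on `(0, π/2]` bounds each half termwise by
`C j^{-γ}`, summable for `γ > 1`, so Tannery's theorem gives the limit `γ B ζ(γ)`. The case of `Ã_N`
is `B = B₀ = 1`, and positivity holds because the weight is `B cos² x + B₀ sin² x`.
-/

open Filter Real Finset Topology

lemma sin_pos_of_mem_Icc {N j : ℕ} (hj : j ∈ Icc 1 (N - 1)) : 0 < sin (j * π / N) := by
  rw [mem_Icc] at hj
  have hN : (0 : ℝ) < N := by exact_mod_cast (by omega : 0 < N)
  have hj0 : (0 : ℝ) < j := by exact_mod_cast hj.1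
  have hjN : (j : ℝ) < N := by exact_mod_cast (by omega : j < N)
  refine sin_pos_of_pos_of_lt_pi (by positivity) ?_
  rw [div_lt_iff₀ hN]
  nlinarith [pi_pos]

lemma two_div_pi_le_sinc {x : ℝ} (hx : 0 < x) (hx' : x ≤ π / 2) : 2 / π ≤ sinc x := by
  rw [sinc_of_ne_zero hx.ne', le_div_iff₀ hx]
  exact mul_le_sin hx.le hx'

lemma summable_one_div_natCast_add_one_rpow {γ : ℝ} (hγ : 1 < γ) :
    Summable fun k : ℕ => 1 / ((k : ℝ) + 1) ^ γ := by
  simpa using (summable_nat_add_iff 1).mpr (summable_one_div_nat_rpow.mpr hγ)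

lemma sum_Icc_eq_tsum_add_tsum_of_symm {M : Type*} [AddCommMonoid M] [TopologicalSpace M]
    (t : ℕ → M) (N : ℕ) (ht : ∀ j ≤ N, t (N - j) = t j) :
    ∑ j ∈ Icc 1 (N - 1), t j =
      (∑' k : ℕ, if 2 * (k + 1) ≤ N then t (k + 1) else 0) +
        ∑' k : ℕ, if 2 * (k + 1) + 1 ≤ N then t (k + 1) else 0 := by
  have htsum (m : ℕ) : (∑' k : ℕ, if 2 * (k + 1) + m ≤ N then t (k + 1) else 0) =
      ∑ k ∈ range (N - 1), if 2 * (k + 1) + m ≤ N then t (k + 1) else 0 :=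
    tsum_eq_sum fun k hk => if_neg (by rw [mem_range] at hk; omega)
  have htsum0 := htsum 0
  simp only [add_zero] at htsum0
  rw [htsum0, htsum 1]
  have hreflect : ∑ k ∈ range (N - 1), (if 2 * (k + 1) ≤ N then 0 else t (k + 1)) =
      ∑ k ∈ range (N - 1), if 2 * (k + 1) + 1 ≤ N then t (k + 1) else 0 := by
    rw [← sum_range_reflect]
    refine sum_congr rfl fun k hk => ?_
    rw [mem_range] at hk
    rw [show N - 1 - 1 - k + 1 = N - (k + 1) by omega, ht _ (by omega)]
    split_ifs <;> first | rfl | omega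
  calc ∑ j ∈ Icc 1 (N - 1), t j = ∑ k ∈ range (N - 1), t (k + 1) := by
        rw [range_eq_Ico, sum_Ico_add' t, zero_add, Ico_add_one_right_eq_Icc]
    _ = _ := by
        rw [← hreflect, ← sum_add_distrib]
        refine sum_congr rfl fun k _ => ?_
        split_ifs <;> simp

lemma rpow_pi_div_mul_eq {x s : ℝ} (hx : 0 ≤ x) (hs : 0 ≤ s) (γ : ℝ) :
    (π / (x * s)) ^ γ = (2 * π) ^ γ / x ^ γ / (2 ^ γ * s ^ γ) := by
  rw [← mul_rpow zero_le_two hs, ← div_rpow (by positivity) hx,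
    ← div_rpow (by positivity) (by positivity)]
  congr 1
  ring

noncomputable def cscTerm (γ : ℝ) (g : ℝ → ℝ) (N j : ℕ) : ℝ :=
  (π / (N * |sin (j * π / N)|)) ^ γ * g (j * π / N)

lemma pi_div_natCast_mul_abs_sin {N j : ℕ} (hN : N ≠ 0) (hj : j ≠ 0) :
    π / (N * |sin (j * π / N)|) = 1 / (j * |sinc (j * π / N)|) := by
  have hN' : (0 : ℝ) < N := by exact_mod_cast Nat.pos_of_ne_zero hN
  have hj' : (0 : ℝ) < j := by exact_mod_cast Nat.pos_of_ne_zero hj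
  have hx : (0 : ℝ) < j * π / N := by positivity
  rw [sinc_of_ne_zero hx.ne', abs_div, abs_of_pos hx]
  field_simp

section cscTerm

variable {γ : ℝ} {g : ℝ → ℝ}

lemma tendsto_cscTerm (hg : ContinuousAt g 0) (k : ℕ) :
    Tendsto (fun N : ℕ => cscTerm γ g N (k + 1)) atTop
      (𝓝 (g 0 * (1 / ((k : ℝ) + 1) ^ γ))) := by
  have hx : Tendsto (fun N : ℕ => ((k + 1 : ℕ) : ℝ) * π / N) atTop (𝓝 0) :=
    tendsto_const_nhds.div_atTop tendsto_natCast_atTop_atTop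
  have hbase : ContinuousAt (fun x => (1 / (((k + 1 : ℕ) : ℝ) * |sinc x|)) ^ γ) 0 := by
    refine ContinuousAt.rpow_const ?_ (Or.inl ?_)
    · exact continuousAt_const.div (by fun_prop)
        (by rw [sinc_zero, abs_one, mul_one]; positivity)
    · rw [sinc_zero, abs_one, mul_one]; positivity
  have hval : g 0 * (1 / ((k : ℝ) + 1) ^ γ) = (1 / (((k + 1 : ℕ) : ℝ) * |sinc 0|)) ^ γ * g 0 := by
    rw [sinc_zero, abs_one, mul_one, div_rpow zero_le_one (by positivity), one_rpow]
    push_cast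
    ring
  rw [hval]
  refine ((hbase.tendsto.comp hx).mul (hg.tendsto.comp hx)).congr' ?_
  filter_upwards [eventually_ne_atTop 0] with N hN
  simp only [Function.comp, cscTerm, pi_div_natCast_mul_abs_sin hN k.succ_ne_zero]

lemma abs_cscTerm_le {M : ℝ} (hγ : 0 ≤ γ) (hM : ∀ x, |g x| ≤ M) {N k : ℕ}
    (hkN : 2 * (k + 1) ≤ N) :
    |cscTerm γ g N (k + 1)| ≤ M * (π / 2) ^ γ * (1 / ((k : ℝ) + 1) ^ γ) := by
  have hN : (0 : ℝ) < N := by exact_mod_cast (by omega : 0 < N)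
  set x : ℝ := ((k + 1 : ℕ) : ℝ) * π / N
  have hx : 0 < x := div_pos (by positivity) hN
  have hx' : x ≤ π / 2 := by
    rw [div_le_div_iff₀ hN two_pos]
    have : (2 : ℝ) * (k + 1) ≤ N := by exact_mod_cast hkN
    push_cast
    nlinarith [pi_pos]
  have hsinc : 2 / π ≤ |sinc x| := (two_div_pi_le_sinc hx hx').trans (le_abs_self _)
  have hbase : 1 / (((k + 1 : ℕ) : ℝ) * |sinc x|) ≤ π / 2 * (1 / ((k : ℝ) + 1)) := by
    have hsinc0 : 0 < |sinc x| := (by positivity : (0 : ℝ) < 2 / π).trans_le hsinc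
    rw [one_div_le (mul_pos (by positivity) hsinc0) (by positivity)]
    push_cast
    calc 1 / (π / 2 * (1 / ((k : ℝ) + 1))) = ((k : ℝ) + 1) * (2 / π) := by field_simp
      _ ≤ ((k : ℝ) + 1) * |sinc x| := by gcongr
  calc |cscTerm γ g N (k + 1)|
      = (1 / (((k + 1 : ℕ) : ℝ) * |sinc x|)) ^ γ * |g x| := by
        rw [cscTerm, pi_div_natCast_mul_abs_sin (by omega) k.succ_ne_zero, abs_mul,
          abs_of_nonneg (by positivity)]
    _ ≤ (π / 2 * (1 / ((k : ℝ) + 1))) ^ γ * M := by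
        gcongr
        exact hM x
    _ = M * (π / 2) ^ γ * (1 / ((k : ℝ) + 1) ^ γ) := by
        rw [mul_rpow (by positivity) (by positivity), div_rpow zero_le_one (by positivity), one_rpow]
        ring

lemma tendsto_tsum_cscTerm_half (hγ : 1 < γ) (hg : ContinuousAt g 0) {M : ℝ}
    (hM : ∀ x, |g x| ≤ M) (m : ℕ) :
    Tendsto (fun N : ℕ => ∑' k : ℕ, if 2 * (k + 1) + m ≤ N then cscTerm γ g N (k + 1) else 0)
      atTop (𝓝 (g 0 * zetaR γ)) := by
  rw [zetaR, ← tsum_mul_left]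
  refine tendsto_tsum_of_dominated_convergence
    ((summable_one_div_natCast_add_one_rpow hγ).mul_left (M * (π / 2) ^ γ))
    (fun k => (tendsto_cscTerm hg k).congr' ?_) (.of_forall fun N k => ?_)
  · filter_upwards [eventually_ge_atTop (2 * (k + 1) + m)] with N hN
    rw [if_pos hN]
  · split_ifs with hkN
    · exact abs_cscTerm_le (by linarith) hM (by omega)
    · have : 0 ≤ M := (abs_nonneg _).trans (hM 0)
      simp only [norm_zero]
      positivity

lemma cscTerm_reflect (hg : ∀ x, g (π - x) = g x) {N j : ℕ} (hj : j ≤ N) :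
    cscTerm γ g N (N - j) = cscTerm γ g N j := by
  rcases Nat.eq_zero_or_pos N with rfl | hN
  · rw [Nat.le_zero.mp hj]
  have hx : ((N - j : ℕ) : ℝ) * π / N = π - j * π / N := by
    rw [Nat.cast_sub hj]
    field_simp
  rw [cscTerm, cscTerm, hx, sin_pi_sub, hg]

theorem tendsto_sum_cscTerm (hγ : 1 < γ) (hg : ContinuousAt g 0) {M : ℝ}
    (hM : ∀ x, |g x| ≤ M) (hsymm : ∀ x, g (π - x) = g x) :
    Tendsto (fun N : ℕ => ∑ j ∈ Icc 1 (N - 1), cscTerm γ g N j) atTop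
      (𝓝 (2 * g 0 * zetaR γ)) := by
  have hlim := (tendsto_tsum_cscTerm_half hγ hg hM 0).add (tendsto_tsum_cscTerm_half hγ hg hM 1)
  simp only [add_zero, ← two_mul, ← mul_assoc] at hlim
  exact hlim.congr fun N =>
    (sum_Icc_eq_tsum_add_tsum_of_symm _ N fun j hj => cscTerm_reflect hsymm hj).symm

end cscTerm

lemma ringB_mul_div_rpow_eq (B B₀ γ : ℝ) (N : ℕ) :
    ringB B B₀ γ N * (2 * π) ^ γ / (N : ℝ) ^ γ =
      γ / 2 * ∑ j ∈ Icc 1 (N - 1), cscTerm γ (fun x => (B - B₀) * cos x ^ 2 + B₀) N j := by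
  simp only [ringB, cscTerm, mul_sum, sum_mul, sum_div]
  refine sum_congr rfl fun j _ => ?_
  rw [rpow_pi_div_mul_eq (Nat.cast_nonneg N) (abs_nonneg _), rpow_add two_pos, rpow_one]
  field_simp

theorem tendsto_ringB_mul_div_rpow (B B₀ : ℝ) {γ : ℝ} (hγ : 1 < γ) :
    Tendsto (fun N : ℕ => ringB B B₀ γ N * (2 * π) ^ γ / (N : ℝ) ^ γ) atTop
      (𝓝 (γ * B * zetaR γ)) := by
  have hbound (x : ℝ) : |(B - B₀) * cos x ^ 2 + B₀| ≤ |B - B₀| + |B₀| := by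
    refine (abs_add_le _ _).trans (add_le_add_left ?_ _)
    rw [abs_mul, abs_of_nonneg (sq_nonneg (cos x))]
    exact mul_le_of_le_one_right (abs_nonneg _) (cos_sq_le_one x)
  have hsymm (x : ℝ) : (B - B₀) * cos (π - x) ^ 2 + B₀ = (B - B₀) * cos x ^ 2 + B₀ := by
    rw [cos_pi_sub, neg_sq]
  have hlim := (tendsto_sum_cscTerm hγ (by fun_prop) hbound hsymm).const_mul (γ / 2)
  rw [cos_zero] at hlim
  convert hlim using 1
  · exact funext (ringB_mul_div_rpow_eq B B₀ γ)
  · congr 1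
    ring

lemma ringA_eq_mul_ringB (A α : ℝ) (N : ℕ) : ringA A α N = A * ringB 1 1 α N := by
  simp only [ringA, ringB, sub_self, zero_mul, zero_add, mul_one]
  ring

lemma ringB_pos {B B₀ γ : ℝ} (hB : 0 ≤ B) (hB₀ : 0 < B₀) (hγ : 0 < γ) {N : ℕ} (hN : 2 ≤ N) :
    0 < ringB B B₀ γ N := by
  refine mul_pos (by positivity) (sum_pos (fun j hj => ?_) ⟨1, mem_Icc.mpr ⟨le_rfl, by omega⟩⟩)
  have hs := sin_pos_of_mem_Icc hj
  have hw : (B - B₀) * cos (j * π / N) ^ 2 + B₀ =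
      B * cos (j * π / N) ^ 2 + B₀ * sin (j * π / N) ^ 2 := by
    rw [sin_sq]; ring
  rw [hw]
  positivity

theorem ring_sums_positivity_and_asymptotics_general
    (A B B₀ α β : ℝ) (hB : 0 < B) (hB₀ : 0 < B₀)
    (hβ : 1 < β) (hαβ : β < α) :
    (∀ N : ℕ, 2 ≤ N → 0 < ringB B B₀ β N) ∧
    (3 < α →
      Filter.Tendsto
        (fun N : ℕ => ringA A α N * (2 * Real.pi) ^ α / (N : ℝ) ^ α)
        Filter.atTop (nhds (α * A * zetaR α)) ∧
      Filter.Tendsto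
        (fun N : ℕ => ringB B B₀ β N * (2 * Real.pi) ^ β / (N : ℝ) ^ β)
        Filter.atTop (nhds (β * B * zetaR β))) := by
  refine ⟨fun N hN => ringB_pos hB.le hB₀ (by linarith) hN,
    fun _ => ⟨?_, tendsto_ringB_mul_div_rpow B B₀ hβ⟩⟩
  have hA := (tendsto_ringB_mul_div_rpow 1 1 (hβ.trans hαβ)).const_mul A
  simp only [ringA_eq_mul_ringB, mul_assoc, mul_div_assoc, mul_one] at hA ⊢
  convert hA using 2
  ring

/-- `B̃_N > 0` for every `N ≥ 2`, and if `α > 3` then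
`Ã_N (2π)^α / N^α → αAζ(α)` and `B̃_N (2π)^β / N^β → βBζ(β)` as `N → ∞`. -/
theorem ring_sums_positivity_and_asymptotics
    (A B B₀ α β : ℝ) (hA : 0 < A) (hB : 0 < B) (hB₀ : 0 < B₀)
    (hβ : 1 < β) (hαβ : β < α) :
    (∀ N : ℕ, 2 ≤ N → 0 < ringB B B₀ β N) ∧
    (3 < α →
      Filter.Tendsto
        (fun N : ℕ => ringA A α N * (2 * Real.pi) ^ α / (N : ℝ) ^ α)
        Filter.atTop (nhds (α * A * zetaR α)) ∧
      Filter.Tendsto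
        (fun N : ℕ => ringB B B₀ β N * (2 * Real.pi) ^ β / (N : ℝ) ^ β)
        Filter.atTop (nhds (β * B * zetaR β))) :=
  ring_sums_positivity_and_asymptotics_general A B B₀ α β hB hB₀ hβ hαβ
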